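/- If (M,P,g) is a W̄₃-manifold of dimension 2n with closed 1-form θ, then the tensor K = (1/2){R + R(·,·,P·,P·)} has Ricci tensor ρ(K)(y,z) = ρ(y,z) - (1/4n){[tr A + θ(Ω)][g(y,z)+g(y,Pz)] + 2nA(y,z)}, scalar curvature τ(K) = τ - div Ω - ((n-1)/2n)θ(Ω), and associated scalar curvature τ*(K) = τ*. -/

import Mathlib

open scoped BigOperators

/-- An abstract (local) model of a Riemannian almost product manifold of
dimension `n`: `V` plays the role of the module of smooth vector fields over
the commutative ℝ-algebra `C` of smooth functions, `g` is the Riemannian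
metric, `P` the almost product structure, `D` the directional derivative of
functions, `bracket` the Lie bracket of vector fields, `nabla` the
Levi-Civita connection of `g`, and `e`, `e'` a frame together with its
`g`-reciprocal frame (used to form traces `g^{ij}·`). -/
structure RAPM (n : ℕ) where
  V : Type
  C : Type
  [instAG : AddCommGroup V]
  [instCR : CommRing C]
  [instAlg : Algebra ℝ C]
  [instMod : Module C V]
  g : V →ₗ[C] V →ₗ[C] C
  P : V →ₗ[C] V
  gSymm : ∀ x y, g x y = g y x
  Pinvol : ∀ x, P (P x) = x
  Piso : ∀ x y, g (P x) (P y) = g x y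
  D : V → C → C
  Dadd : ∀ x f h, D x (f + h) = D x f + D x h
  bracket : V → V → V
  bracketD : ∀ x y f, D (bracket x y) f = D x (D y f) - D y (D x f)
  jacobi : ∀ x y z,
    bracket x (bracket y z) + bracket y (bracket z x) + bracket z (bracket x y) = 0
  nabla : V → V → V
  nabla_add₁ : ∀ x y z, nabla (x + y) z = nabla x z + nabla y z
  nabla_smul₁ : ∀ (f : C) x y, nabla (f • x) y = f • nabla x y
  nabla_add₂ : ∀ x y z, nabla x (y + z) = nabla x y + nabla x z
  nabla_leibniz : ∀ x (f : C) y, nabla x (f • y) = D x f • y + f • nabla x y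
  nabla_metric : ∀ x y z, D x (g y z) = g (nabla x y) z + g y (nabla x z)
  torsion_free : ∀ x y, nabla x y - nabla y x = bracket x y
  e : Fin n → V
  e' : Fin n → V
  dual_frame : ∀ i j, g (e' i) (e j) = if i = j then 1 else 0
  frame_span : ∀ v : V, v = ∑ i, g (e' i) v • e i

namespace RAPM

attribute [instance] RAPM.instAG RAPM.instCR RAPM.instAlg RAPM.instMod

variable {n : ℕ} (Q : RAPM n)

/-- The fundamental tensor `F(x,y,z) = g((∇ₓP)y, z)`. -/
def F (x y z : Q.V) : Q.C := Q.g (Q.nabla x (Q.P y) - Q.P (Q.nabla x y)) z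

/-- The curvature operator `R(x,y)z`. -/
def R (x y z : Q.V) : Q.V :=
  Q.nabla x (Q.nabla y z) - Q.nabla y (Q.nabla x z) - Q.nabla (Q.bracket x y) z

/-- The (0,4) curvature tensor `R(x,y,z,w) = g(R(x,y)z, w)`. -/
def Rm (x y z w : Q.V) : Q.C := Q.g (Q.R x y z) w

/-- `tr P = g^{ij} g(e_i, P e_j)`. -/
def trP : Q.C := ∑ i, Q.g (Q.e' i) (Q.P (Q.e i))

/-- The Lee form `θ(x) = g^{ij} F(e_i, e_j, x)`. -/
def theta (x : Q.V) : Q.C := ∑ i, Q.F (Q.e' i) (Q.e i) x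

/-- The covariant derivative `(∇ₓθ)y`. -/
def nablaTheta (x y : Q.V) : Q.C := Q.D x (Q.theta y) - Q.theta (Q.nabla x y)

/-- `θ` is closed iff `(∇ₓθ)y = (∇_yθ)x`. -/
def closed : Prop := ∀ x y, Q.nablaTheta x y = Q.nablaTheta y x

/-- The covariant derivative `(∇ₓF)(y,z,w)`. -/
def nablaF (x y z w : Q.V) : Q.C :=
  Q.D x (Q.F y z w) - Q.F (Q.nabla x y) z w - Q.F y (Q.nabla x z) w
    - Q.F y z (Q.nabla x w)

def psi1 (S : Q.V → Q.V → Q.C) (x y z w : Q.V) : Q.C :=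
  Q.g y z * S x w - Q.g x z * S y w + S y z * Q.g x w - S x z * Q.g y w

def psi2 (S : Q.V → Q.V → Q.C) (x y z w : Q.V) : Q.C :=
  Q.psi1 S x y (Q.P z) (Q.P w)

/-- The associated metric `g̃(x,y) = g(x,Py)`. -/
def gP (x y : Q.V) : Q.C := Q.g x (Q.P y)

noncomputable def pi1 (x y z w : Q.V) : Q.C :=
  ((1 : ℝ)/2) • Q.psi1 (fun a b => Q.g a b) x y z w

noncomputable def pi2 (x y z w : Q.V) : Q.C :=
  ((1 : ℝ)/2) • Q.psi2 (fun a b => Q.g a b) x y z w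

def pi3 (x y z w : Q.V) : Q.C := Q.psi1 Q.gP x y z w

/-- The Ricci tensor `ρ(L)(y,z) = g^{ij} L(e_i,y,z,e_j)` of a (0,4)-tensor. -/
def ric (L : Q.V → Q.V → Q.V → Q.V → Q.C) (y z : Q.V) : Q.C :=
  ∑ i, L (Q.e' i) y z (Q.e i)

/-- The scalar curvature `τ(L) = g^{ij} ρ(L)(e_i,e_j)`. -/
def scal (L : Q.V → Q.V → Q.V → Q.V → Q.C) : Q.C := ∑ i, Q.ric L (Q.e i) (Q.e' i)

/-- The associated Ricci tensor `ρ*(L)(y,z) = g^{ij} L(e_i,y,z,Pe_j)`. -/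
def ricStar (L : Q.V → Q.V → Q.V → Q.V → Q.C) (y z : Q.V) : Q.C :=
  ∑ i, L (Q.e' i) y z (Q.P (Q.e i))

/-- The associated scalar curvature `τ*(L)`. -/
def scalStar (L : Q.V → Q.V → Q.V → Q.V → Q.C) : Q.C :=
  ∑ i, Q.ricStar L (Q.e i) (Q.e' i)

/-- The trace `g^{ij} S(e_i,e_j)` of a (0,2)-tensor. -/
def trB (S : Q.V → Q.V → Q.C) : Q.C := ∑ i, S (Q.e i) (Q.e' i)

/-- The divergence of a vector field. -/
def divg (v : Q.V) : Q.C := ∑ i, Q.g (Q.e' i) (Q.nabla (Q.e i) v)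

/-- A curvature-like tensor. -/
def curvatureLike (L : Q.V → Q.V → Q.V → Q.V → Q.C) : Prop :=
  (∀ x y z w, L x y z w = - L y x z w) ∧
  (∀ x y z w, L x y z w = - L x y w z) ∧
  (∀ x y z w, L x y z w + L y z x w + L z x y w = 0)

/-- A Riemannian P-tensor. -/
def isPtensor (L : Q.V → Q.V → Q.V → Q.V → Q.C) : Prop :=
  Q.curvatureLike L ∧ ∀ x y z w, L x y (Q.P z) (Q.P w) = L x y z w

/-- The defining condition of the Naveira class `W̄₃` (dimension `n`, so the
factor `1/(2n)` of the paper is `1/n` here). -/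
def W3 : Prop :=
  (∀ x y z, Q.F x y z =
    ((1 : ℝ)/(n : ℝ)) • ((Q.g x y + Q.g x (Q.P y)) * Q.theta z +
      (Q.g x z + Q.g x (Q.P z)) * Q.theta y)) ∧
  (∀ x, Q.theta (Q.P x) = - Q.theta x)

/-- The defining condition of the Naveira class `W̄₆`. -/
def W6 : Prop :=
  (∀ x y z, Q.F x y z =
    ((1 : ℝ)/(n : ℝ)) • ((Q.g x y - Q.g x (Q.P y)) * Q.theta z +
      (Q.g x z - Q.g x (Q.P z)) * Q.theta y)) ∧
  (∀ x, Q.theta (Q.P x) = Q.theta x)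

end RAPM

/-!
The Ricci identity for `P`,
`R(x,y,Pz,Pw) = R(x,y,z,w) + (∇ₓF)(y,z,Pw) - (∇_yF)(x,z,Pw)`,
makes `ρ(K) - ρ` half the difference of two traces of `∇F`. On a `W̄₃`-manifold `F` is built
from `g + g̃` and `θ = g(Ω, ·)`, with `PΩ = -Ω`; differentiating expresses `∇F` through `F` and
`∇θ`, which is symmetric because `θ` is closed, and both traces reduce to `div Ω`, `θ(Ω)` and
`∇θ`. Contracting once more gives `τ(K)`. The second half of `K` has associated scalar curvature
`τ*` because `P` is `g`-symmetric and `R` has pair symmetry.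
-/

lemma eq_of_two_mul_eq {A : Type*} [Ring A] [Algebra ℝ A] {a b : A} (h : 2 * a = 2 * b) :
    a = b := by
  have h2 : (2 : ℝ) • (a - b) = 0 := by rw [two_smul, ← two_mul, mul_sub, h, sub_self]
  exact sub_eq_zero.mp ((smul_eq_zero.mp h2).resolve_left two_ne_zero)

lemma algebraMap_half_mul_two {A : Type*} [Ring A] [Algebra ℝ A] :
    algebraMap ℝ A (1 / 2) * 2 = 1 := by
  rw [← map_ofNat (algebraMap ℝ A) 2, ← map_mul]
  norm_num

namespace RAPM

variable {m : ℕ} (Q : RAPM m)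

section Frame

lemma g_P_right (x y : Q.V) : Q.g x (Q.P y) = Q.g (Q.P x) y := by
  rw [← Q.Piso x (Q.P y), Q.Pinvol]

lemma ext_of_g_dual {v w : Q.V} (h : ∀ i, Q.g (Q.e' i) v = Q.g (Q.e' i) w) : v = w := by
  rw [Q.frame_span v, Q.frame_span w]
  simp only [h]

lemma sum_g_dual_mul (S : Q.V →ₗ[Q.C] Q.C) (v : Q.V) :
    ∑ i, Q.g (Q.e' i) v * S (Q.e i) = S v := by
  conv_rhs => rw [Q.frame_span v]
  simp [map_sum]

lemma frame_span_dual (v : Q.V) : v = ∑ i, Q.g (Q.e i) v • Q.e' i := by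
  refine Q.ext_of_g_dual fun j => ?_
  simp only [map_sum, map_smul, smul_eq_mul]
  rw [Q.gSymm _ v, ← Q.sum_g_dual_mul (Q.g v) (Q.e' j)]
  exact Finset.sum_congr rfl fun i _ => by rw [Q.gSymm (Q.e' i), Q.gSymm v, mul_comm]

lemma sum_g_mul_dual (S : Q.V →ₗ[Q.C] Q.C) (v : Q.V) :
    ∑ i, Q.g (Q.e i) v * S (Q.e' i) = S v := by
  conv_rhs => rw [Q.frame_span_dual v]
  simp [map_sum]

lemma sum_g_dual_self : ∑ i, Q.g (Q.e' i) (Q.e i) = m := by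
  simp [Q.dual_frame]

lemma sum_P_apply_dual (B : Q.V →ₗ[Q.C] Q.V →ₗ[Q.C] Q.C) :
    ∑ i, B (Q.P (Q.e i)) (Q.e' i) = ∑ i, B (Q.e i) (Q.P (Q.e' i)) := by
  conv_lhs => enter [2, i]; rw [Q.frame_span (Q.P (Q.e i))]
  simp only [map_sum, map_smul, LinearMap.sum_apply, LinearMap.smul_apply, smul_eq_mul]
  rw [Finset.sum_comm]
  refine Finset.sum_congr rfl fun k _ => ?_
  rw [← Q.sum_g_mul_dual (B (Q.e k)) (Q.P (Q.e' k))]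
  exact Finset.sum_congr rfl fun i _ => by
    rw [Q.g_P_right, Q.gSymm (Q.P _)]

end Frame

section Derivation

lemma D_neg (x : Q.V) (f : Q.C) : Q.D x (-f) = -Q.D x f :=
  map_neg (AddMonoidHom.mk' (Q.D x) (Q.Dadd x)) f

/-- Every function is a value of `g`, on which `D` satisfies the Leibniz rule by metric
compatibility. -/
lemma D_mul (hm : 0 < m) (x : Q.V) (f h : Q.C) :
    Q.D x (f * h) = Q.D x f * h + f * Q.D x h := by
  obtain ⟨u, w, rfl⟩ : ∃ u w, h = Q.g u w :=
    ⟨h • Q.e' ⟨0, hm⟩, Q.e ⟨0, hm⟩, by simp [Q.dual_frame]⟩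
  rw [← smul_eq_mul, ← LinearMap.map_smul₂, Q.nabla_metric, Q.nabla_leibniz, Q.nabla_metric]
  simp only [LinearMap.map_add₂, LinearMap.map_smul₂, smul_eq_mul]
  ring

lemma D_one (hm : 0 < m) (x : Q.V) : Q.D x 1 = 0 := by
  have h := Q.D_mul hm x 1 1
  rw [mul_one, one_mul, mul_one] at h
  exact left_eq_add.mp h

lemma D_natCast (hm : 0 < m) (x : Q.V) (k : ℕ) : Q.D x k = 0 := by
  rw [← nsmul_one]
  change AddMonoidHom.mk' (Q.D x) (Q.Dadd x) (k • 1) = 0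
  rw [map_nsmul]
  exact smul_eq_zero_of_right k (Q.D_one hm x)

noncomputable def invDim : Q.C := algebraMap ℝ Q.C (1 / m)

lemma algebraMap_one_div_dim : algebraMap ℝ Q.C (1 / m) = Q.invDim := rfl

lemma invDim_mul_dim (hm : 0 < m) : Q.invDim * m = 1 := by
  rw [invDim, ← map_natCast (algebraMap ℝ Q.C), ← map_mul, one_div_mul_cancel (by positivity),
    map_one]

lemma D_invDim (hm : 0 < m) (x : Q.V) : Q.D x Q.invDim = 0 := by
  have h := congrArg (Q.D x) (Q.invDim_mul_dim hm)
  rw [Q.D_mul hm, Q.D_natCast hm, Q.D_one hm] at h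
  linear_combination Q.invDim * h - Q.D x Q.invDim * Q.invDim_mul_dim hm

end Derivation

section Curvature

lemma nabla_sub₁ (x y z : Q.V) : Q.nabla (x - y) z = Q.nabla x z - Q.nabla y z :=
  map_sub (AddMonoidHom.mk' (Q.nabla · z) fun x y => Q.nabla_add₁ x y z) x y

lemma nabla_sub₂ (x y z : Q.V) : Q.nabla x (y - z) = Q.nabla x y - Q.nabla x z :=
  map_sub (AddMonoidHom.mk' (Q.nabla x) (Q.nabla_add₂ x)) y z

lemma R_antisymm (x y z : Q.V) : Q.R x y z = -Q.R y x z := by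
  simp only [R, ← Q.torsion_free, Q.nabla_sub₁]
  abel

lemma R_add₃ (x y z w : Q.V) : Q.R x y (z + w) = Q.R x y z + Q.R x y w := by
  simp only [R, Q.nabla_add₂]
  abel

lemma R_bianchi (x y z : Q.V) : Q.R x y z + Q.R y z x + Q.R z x y = 0 := by
  have j := Q.jacobi x y z
  simp only [R, ← Q.torsion_free, Q.nabla_sub₁, Q.nabla_sub₂] at j ⊢
  abel_nf at j ⊢
  exact j

lemma Rm_self₃₄ (x y z : Q.V) : Q.Rm x y z z = 0 := by
  have hD : ∀ u, Q.D u (Q.g z z) = 2 * Q.g (Q.nabla u z) z := fun u => by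
    rw [Q.nabla_metric, Q.gSymm z]
    ring
  have hDD : ∀ u v, Q.D u (Q.D v (Q.g z z))
      = 2 * (Q.g (Q.nabla u (Q.nabla v z)) z + Q.g (Q.nabla v z) (Q.nabla u z)) := fun u v => by
    rw [hD, two_mul, Q.Dadd, Q.nabla_metric]
    ring
  have h := Q.bracketD x y (Q.g z z)
  rw [hDD, hDD, hD, Q.gSymm (Q.nabla y z)] at h
  apply eq_of_two_mul_eq
  simp only [Rm, R, LinearMap.map_sub₂]
  linear_combination -h

lemma Rm_antisymm₃₄ (x y z w : Q.V) : Q.Rm x y z w = -Q.Rm x y w z := by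
  have h := Q.Rm_self₃₄ x y (z + w)
  have hz := Q.Rm_self₃₄ x y z
  have hw := Q.Rm_self₃₄ x y w
  simp only [Rm, R_add₃, map_add, LinearMap.add_apply] at h hz hw ⊢
  linear_combination h - hz - hw

lemma Rm_antisymm₁₂ (x y z w : Q.V) : Q.Rm x y z w = -Q.Rm y x z w := by
  rw [Rm, Rm, Q.R_antisymm x y, map_neg, LinearMap.neg_apply]

lemma Rm_bianchi (x y z w : Q.V) : Q.Rm x y z w + Q.Rm y z x w + Q.Rm z x y w = 0 := by
  rw [Rm, Rm, Rm, ← LinearMap.map_add₂, ← LinearMap.map_add₂, Q.R_bianchi, map_zero,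
    LinearMap.zero_apply]

lemma Rm_pair_comm (x y z w : Q.V) : Q.Rm x y z w = Q.Rm z w x y := by
  apply eq_of_two_mul_eq
  linear_combination Q.Rm_bianchi x y z w + Q.Rm_bianchi y z w x - Q.Rm_bianchi z w x y
    - Q.Rm_bianchi w x y z + Q.Rm_antisymm₃₄ x y z w - Q.Rm_antisymm₁₂ x z y w
    + Q.Rm_antisymm₃₄ x z y w + Q.Rm_antisymm₁₂ x w y z - Q.Rm_antisymm₃₄ x w y z
    + Q.Rm_antisymm₁₂ x w z y - Q.Rm_antisymm₃₄ y z x w + Q.Rm_antisymm₃₄ y w x z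
    - Q.Rm_antisymm₁₂ y w z x - Q.Rm_antisymm₃₄ z w x y

def nablaP (y z : Q.V) : Q.V := Q.nabla y (Q.P z) - Q.P (Q.nabla y z)

def nabla2P (x y z : Q.V) : Q.V :=
  Q.nabla x (Q.nablaP y z) - Q.nablaP (Q.nabla x y) z - Q.nablaP y (Q.nabla x z)

lemma nablaF_eq_g (x y z w : Q.V) : Q.nablaF x y z w = Q.g (Q.nabla2P x y z) w := by
  have hF : ∀ a b c, Q.F a b c = Q.g (Q.nablaP a b) c := fun _ _ _ => rfl
  rw [nablaF, hF, hF, hF, hF, Q.nabla_metric, nabla2P]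
  simp only [LinearMap.map_sub₂]
  ring

lemma nabla2P_sub_nabla2P (x y z : Q.V) :
    Q.nabla2P x y z - Q.nabla2P y x z = Q.R x y (Q.P z) - Q.P (Q.R x y z) := by
  simp only [nabla2P, nablaP, R, ← Q.torsion_free, Q.nabla_sub₁, Q.nabla_sub₂, map_sub]
  abel

/-- The Ricci identity for `P`. -/
lemma Rm_P_P (x y z w : Q.V) :
    Q.Rm x y (Q.P z) (Q.P w)
      = Q.Rm x y z w + Q.nablaF x y z (Q.P w) - Q.nablaF y x z (Q.P w) := by
  have h := congrArg (fun v => Q.g v (Q.P w)) (Q.nabla2P_sub_nabla2P x y z)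
  simp only [LinearMap.map_sub₂, Q.Piso] at h
  rw [Q.nablaF_eq_g, Q.nablaF_eq_g, Rm, Rm]
  linear_combination -h

def RmP (x y z w : Q.V) : Q.C := Q.Rm x y (Q.P z) (Q.P w)

lemma ric_RmP (y z : Q.V) :
    Q.ric Q.RmP y z = Q.ric Q.Rm y z + ∑ i, Q.nablaF (Q.e' i) y z (Q.P (Q.e i))
      - ∑ i, Q.nablaF y (Q.e' i) z (Q.P (Q.e i)) := by
  simp only [ric, RmP, Rm_P_P, Finset.sum_add_distrib, Finset.sum_sub_distrib]

/-- Only `g` is linear a priori: linearity in the second slot comes from pair symmetry, in the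
third from antisymmetry in the last pair. -/
def Rm₂₃ (x w : Q.V) : Q.V →ₗ[Q.C] Q.V →ₗ[Q.C] Q.C :=
  LinearMap.mk₂ Q.C (fun y z => Q.Rm x y z w)
    (fun y y' z => by
      rw [Q.Rm_pair_comm _ (y + y'), Q.Rm_pair_comm _ y, Q.Rm_pair_comm _ y']
      simp only [Rm, map_add])
    (fun c y z => by
      rw [Q.Rm_pair_comm _ (c • y), Q.Rm_pair_comm _ y]
      simp only [Rm, map_smul])
    (fun y z z' => by
      rw [Q.Rm_antisymm₃₄ _ _ (z + z'), Q.Rm_antisymm₃₄ _ _ z, Q.Rm_antisymm₃₄ _ _ z']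
      simp only [Rm, map_add]
      ring)
    (fun c y z => by
      rw [Q.Rm_antisymm₃₄ _ _ (c • z), Q.Rm_antisymm₃₄ _ _ z]
      simp only [Rm, map_smul, smul_eq_mul]
      ring)

lemma scalStar_RmP : Q.scalStar Q.RmP = Q.scalStar Q.Rm := by
  have hP : ∀ j, ∑ i, Q.Rm (Q.e' j) (Q.e i) (Q.P (Q.e' i)) (Q.e j)
      = ∑ i, Q.Rm (Q.e' j) (Q.P (Q.e i)) (Q.e' i) (Q.e j) := fun j =>
    (Q.sum_P_apply_dual (Q.Rm₂₃ (Q.e' j) (Q.e j))).symm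
  simp only [scalStar, ricStar, RmP, Q.Pinvol]
  rw [Finset.sum_comm, Finset.sum_congr rfl fun j _ => hP j]
  exact Finset.sum_congr rfl fun j _ => Finset.sum_congr rfl fun i _ => Q.Rm_pair_comm _ _ _ _

variable {L L' K : Q.V → Q.V → Q.V → Q.V → Q.C} {c : ℝ}

lemma ric_eq_smul_add (hK : ∀ x y z w, K x y z w = c • (L x y z w + L' x y z w)) (y z : Q.V) :
    Q.ric K y z = c • (Q.ric L y z + Q.ric L' y z) := by
  simp only [ric, hK, smul_add, Finset.smul_sum, Finset.sum_add_distrib]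

lemma scalStar_eq_smul_add (hK : ∀ x y z w, K x y z w = c • (L x y z w + L' x y z w)) :
    Q.scalStar K = c • (Q.scalStar L + Q.scalStar L') := by
  simp only [scalStar, ricStar, hK, smul_add, Finset.smul_sum, Finset.sum_add_distrib]

lemma scalStar_K (hK : ∀ x y z w, K x y z w =
      ((1 : ℝ) / 2) • (Q.Rm x y z w + Q.Rm x y (Q.P z) (Q.P w))) :
    Q.scalStar K = Q.scalStar Q.Rm := by
  rw [Q.scalStar_eq_smul_add (L' := Q.RmP) hK, Q.scalStar_RmP, ← two_smul ℝ, smul_smul]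
  norm_num

end Curvature

section W3

/-- The form `g + g̃` of the paper. -/
def G : Q.V →ₗ[Q.C] Q.V →ₗ[Q.C] Q.C := Q.g.compl₂ (LinearMap.id + Q.P)

lemma G_apply (x y : Q.V) : Q.G x y = Q.g x (y + Q.P y) := rfl

lemma G_apply_add (x y : Q.V) : Q.G x y = Q.g x y + Q.g x (Q.P y) := by
  rw [G_apply, map_add]

lemma G_comm (x y : Q.V) : Q.G x y = Q.G y x := by
  rw [G_apply_add, G_apply_add, Q.gSymm x y, Q.g_P_right x y, Q.gSymm (Q.P x) y]

lemma G_P (x y : Q.V) : Q.G x (Q.P y) = Q.G x y := by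
  rw [G_apply, G_apply, Q.Pinvol, add_comm]

lemma G_eq_zero_of_P_eq_neg {v : Q.V} (hv : Q.P v = -v) (x : Q.V) : Q.G x v = 0 := by
  rw [G_apply, hv, add_neg_cancel, map_zero]

lemma D_G (x y z : Q.V) :
    Q.D x (Q.G y z) = Q.G (Q.nabla x y) z + Q.G y (Q.nabla x z) + Q.F x z y := by
  rw [F, Q.gSymm _ y, Q.G_apply y z, Q.nabla_metric]
  simp only [G_apply, Q.nabla_add₂, map_add, map_sub]
  ring

lemma F_eq_of_W3 (hW : Q.W3) (x y z : Q.V) :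
    Q.F x y z = Q.invDim * (Q.G x y * Q.theta z + Q.G x z * Q.theta y) := by
  rw [hW.1, Algebra.smul_def, G_apply_add, G_apply_add, Q.algebraMap_one_div_dim]

lemma nablaF_of_W3 (hm : 0 < m) (hW : Q.W3) (x y z w : Q.V) :
    Q.nablaF x y z w = Q.invDim * (Q.F x z y * Q.theta w + Q.G y z * Q.nablaTheta x w
      + Q.nablaTheta x z * Q.G y w + Q.F x w y * Q.theta z) := by
  have hDθ : ∀ u, Q.D x (Q.theta u) = Q.nablaTheta x u + Q.theta (Q.nabla x u) := fun u => by
    rw [nablaTheta]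
    ring
  rw [nablaF, Q.F_eq_of_W3 hW y z w, Q.F_eq_of_W3 hW (Q.nabla x y) z w,
    Q.F_eq_of_W3 hW y (Q.nabla x z) w, Q.F_eq_of_W3 hW y z (Q.nabla x w), Q.D_mul hm,
    Q.D_invDim hm, Q.Dadd, Q.D_mul hm, Q.D_mul hm, Q.D_G, Q.D_G, hDθ, hDθ]
  ring

variable {Ω : Q.V}

lemma P_eq_neg_of_W3 (hW : Q.W3) (hΩ : ∀ x, Q.g Ω x = Q.theta x) : Q.P Ω = -Ω := by
  refine Q.ext_of_g_dual fun i => ?_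
  rw [Q.g_P_right, Q.gSymm _ Ω, hΩ, hW.2, ← hΩ, map_neg, Q.gSymm Ω]

lemma nablaTheta_eq (hΩ : ∀ x, Q.g Ω x = Q.theta x) (x y : Q.V) :
    Q.nablaTheta x y = Q.g (Q.nabla x Ω) y := by
  rw [nablaTheta, ← hΩ, ← hΩ, Q.nabla_metric]
  ring

lemma F_Ω_of_W3 (hW : Q.W3) (hΩ : ∀ x, Q.g Ω x = Q.theta x) (x y : Q.V) :
    Q.F x y Ω = Q.invDim * Q.G x y * Q.theta Ω := by
  rw [Q.F_eq_of_W3 hW, Q.G_eq_zero_of_P_eq_neg (Q.P_eq_neg_of_W3 hW hΩ)]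
  ring

lemma nablaTheta_P_of_W3 (hW : Q.W3) (hΩ : ∀ x, Q.g Ω x = Q.theta x) (x w : Q.V) :
    Q.nablaTheta x (Q.P w) = -Q.nablaTheta x w - Q.invDim * Q.G x w * Q.theta Ω := by
  have hPΩ := Q.P_eq_neg_of_W3 hW hΩ
  have h1 := Q.nabla_metric x Ω (Q.P w)
  have h2 := Q.nabla_metric x Ω w
  have h3 : Q.F x w Ω = Q.g Ω (Q.nabla x (Q.P w)) + Q.g Ω (Q.nabla x w) := by
    rw [F, LinearMap.map_sub₂, Q.gSymm _ Ω, Q.gSymm _ Ω, Q.g_P_right Ω, hPΩ, map_neg,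
      LinearMap.neg_apply, sub_neg_eq_add]
  rw [Q.g_P_right Ω w, hPΩ, map_neg, LinearMap.neg_apply, D_neg] at h1
  rw [Q.nablaTheta_eq hΩ, Q.nablaTheta_eq hΩ, ← Q.F_Ω_of_W3 hW hΩ, h3]
  linear_combination -h1 - h2

lemma sum_G_dual_self (htr : Q.trP = 0) : ∑ i, Q.G (Q.e' i) (Q.e i) = m := by
  have h : Q.trP = ∑ i, Q.g (Q.e' i) (Q.P (Q.e i)) := rfl
  simp only [G_apply_add, Finset.sum_add_distrib, Q.sum_g_dual_self, ← h, htr, add_zero]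

lemma sum_theta_mul_G_dual (hW : Q.W3) (hΩ : ∀ x, Q.g Ω x = Q.theta x) (v : Q.V) :
    ∑ i, Q.theta (Q.e i) * Q.G (Q.e' i) v = 0 := by
  have h := Q.sum_g_dual_mul (Q.g Ω) (v + Q.P v)
  rw [map_add, hΩ, hΩ, hW.2, add_neg_cancel] at h
  rw [← h]
  exact Finset.sum_congr rfl fun i _ => by rw [G_apply, hΩ, mul_comm]

lemma sum_G_mul_theta_dual (hW : Q.W3) (hΩ : ∀ x, Q.g Ω x = Q.theta x) (v : Q.V) :
    ∑ i, Q.G (Q.e i) v * Q.theta (Q.e' i) = 0 := by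
  have h := Q.sum_g_mul_dual (Q.g Ω) (v + Q.P v)
  rw [map_add, hΩ, hΩ, hW.2, add_neg_cancel] at h
  rw [← h]
  exact Finset.sum_congr rfl fun i _ => by rw [G_apply, hΩ]

lemma sum_theta_mul_theta_dual (hΩ : ∀ x, Q.g Ω x = Q.theta x) :
    ∑ i, Q.theta (Q.e i) * Q.theta (Q.e' i) = Q.theta Ω := by
  rw [← hΩ, ← Q.sum_g_mul_dual (Q.g Ω) Ω]
  exact Finset.sum_congr rfl fun i _ => by rw [Q.gSymm _ Ω, hΩ, hΩ]

lemma trB_nablaTheta (hΩ : ∀ x, Q.g Ω x = Q.theta x) : Q.trB Q.nablaTheta = Q.divg Ω :=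
  Finset.sum_congr rfl fun i _ => by rw [Q.nablaTheta_eq hΩ, Q.gSymm]

lemma trace₁₄_nablaF_of_W3 (hm : 0 < m) (hW : Q.W3) (htr : Q.trP = 0) (hθ : Q.closed)
    (hΩ : ∀ x, Q.g Ω x = Q.theta x) (y z : Q.V) :
    ∑ i, Q.nablaF (Q.e' i) y z (Q.P (Q.e i)) = Q.invDim * (Q.theta y * Q.theta z
      - Q.G y z * (Q.divg Ω + Q.theta Ω + Q.invDim * Q.theta Ω)) := by
  set κ := Q.invDim
  have hκ : κ * m = 1 := Q.invDim_mul_dim hm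
  have hFθ : ∑ i, Q.F (Q.e' i) z y * Q.theta (Q.P (Q.e i)) = 0 := by
    have hterm : ∀ i, Q.F (Q.e' i) z y * Q.theta (Q.P (Q.e i))
        = -(κ * Q.theta y) * (Q.theta (Q.e i) * Q.G (Q.e' i) z)
          - (κ * Q.theta z) * (Q.theta (Q.e i) * Q.G (Q.e' i) y) := fun i => by
      rw [Q.F_eq_of_W3 hW, hW.2]
      ring
    simp only [hterm, Finset.sum_sub_distrib, ← Finset.mul_sum, Q.sum_theta_mul_G_dual hW hΩ]
    ring
  have hdiv : ∑ i, Q.nablaTheta (Q.e' i) (Q.P (Q.e i)) = -(Q.divg Ω + Q.theta Ω) := by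
    have hterm : ∀ i, Q.nablaTheta (Q.e' i) (Q.P (Q.e i))
        = -Q.nablaTheta (Q.e i) (Q.e' i) - κ * Q.theta Ω * Q.G (Q.e' i) (Q.e i) := fun i => by
      rw [Q.nablaTheta_P_of_W3 hW hΩ, hθ]
      ring
    simp only [hterm, Finset.sum_sub_distrib, Finset.sum_neg_distrib, ← Finset.mul_sum,
      Q.sum_G_dual_self htr]
    rw [← trB, Q.trB_nablaTheta hΩ]
    linear_combination -Q.theta Ω * hκ
  have hθG :
      ∑ i, Q.nablaTheta (Q.e' i) z * Q.G y (Q.P (Q.e i)) = -(κ * Q.G y z * Q.theta Ω) := by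
    have hterm : ∀ i, Q.nablaTheta (Q.e' i) z * Q.G y (Q.P (Q.e i))
        = Q.g (Q.e i) (y + Q.P y) * Q.g (Q.nabla z Ω) (Q.e' i) := fun i => by
      rw [hθ, Q.nablaTheta_eq hΩ, Q.G_P, Q.G_comm, G_apply, mul_comm]
    rw [Finset.sum_congr rfl fun i _ => hterm i, Q.sum_g_mul_dual, map_add, ← Q.nablaTheta_eq hΩ,
      ← Q.nablaTheta_eq hΩ, Q.nablaTheta_P_of_W3 hW hΩ, Q.G_comm z y]
    ring
  have htrF : ∑ i, Q.F (Q.e' i) (Q.P (Q.e i)) y = Q.theta y := by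
    have hterm : ∀ i, Q.F (Q.e' i) (Q.P (Q.e i)) y
        = κ * Q.theta y * Q.G (Q.e' i) (Q.e i)
          - κ * (Q.theta (Q.e i) * Q.G (Q.e' i) y) := fun i => by
      rw [Q.F_eq_of_W3 hW, Q.G_P, hW.2]
      ring
    simp only [hterm, Finset.sum_sub_distrib, ← Finset.mul_sum, Q.sum_G_dual_self htr,
      Q.sum_theta_mul_G_dual hW hΩ]
    linear_combination Q.theta y * hκ
  simp only [Q.nablaF_of_W3 hm hW, ← Finset.mul_sum, Finset.sum_add_distrib, ← Finset.sum_mul]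
  rw [hFθ, hdiv, hθG, htrF]
  ring

lemma trace₂₄_nablaF_of_W3 (hm : 0 < m) (hW : Q.W3) (htr : Q.trP = 0)
    (hΩ : ∀ x, Q.g Ω x = Q.theta x) (y z : Q.V) :
    ∑ i, Q.nablaF y (Q.e' i) z (Q.P (Q.e i))
      = Q.nablaTheta y z - 2 * Q.invDim ^ 2 * Q.G y z * Q.theta Ω := by
  set κ := Q.invDim
  have hκ : κ * m = 1 := Q.invDim_mul_dim hm
  have hFθ : ∑ i, Q.F y z (Q.e' i) * Q.theta (Q.P (Q.e i)) = -(κ * Q.G y z * Q.theta Ω) := by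
    have h := Q.sum_g_mul_dual (Q.g (Q.nabla y (Q.P z) - Q.P (Q.nabla y z))) Ω
    change ∑ i, Q.g (Q.e i) Ω * Q.F y z (Q.e' i) = Q.F y z Ω at h
    rw [Q.F_Ω_of_W3 hW hΩ] at h
    rw [← h, ← Finset.sum_neg_distrib]
    exact Finset.sum_congr rfl fun i _ => by rw [hW.2, Q.gSymm _ Ω, hΩ]; ring
  have hGθ :
      ∑ i, Q.G (Q.e' i) z * Q.nablaTheta y (Q.P (Q.e i)) = -(κ * Q.G y z * Q.theta Ω) := by
    have hterm : ∀ i, Q.G (Q.e' i) z * Q.nablaTheta y (Q.P (Q.e i))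
        = Q.g (Q.e' i) (z + Q.P z) * (Q.g (Q.nabla y Ω)).comp Q.P (Q.e i) := fun i => by
      rw [G_apply, Q.nablaTheta_eq hΩ]
      rfl
    rw [Finset.sum_congr rfl fun i _ => hterm i, Q.sum_g_dual_mul, LinearMap.comp_apply, map_add,
      Q.Pinvol, add_comm, map_add, ← Q.nablaTheta_eq hΩ, ← Q.nablaTheta_eq hΩ,
      Q.nablaTheta_P_of_W3 hW hΩ]
    ring
  have htrG : ∑ i, Q.G (Q.e' i) (Q.P (Q.e i)) = m := by
    simp only [Q.G_P, Q.sum_G_dual_self htr]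
  have htrF : ∑ i, Q.F y (Q.P (Q.e i)) (Q.e' i) = 0 := by
    have hterm : ∀ i, Q.F y (Q.P (Q.e i)) (Q.e' i)
        = κ * (Q.G (Q.e i) y * Q.theta (Q.e' i)) - κ * (Q.theta (Q.e i) * Q.G (Q.e' i) y) :=
      fun i => by
        rw [Q.F_eq_of_W3 hW, Q.G_P, hW.2, Q.G_comm y, Q.G_comm y]
        ring
    simp only [hterm, Finset.sum_sub_distrib, ← Finset.mul_sum, Q.sum_G_mul_theta_dual hW hΩ,
      Q.sum_theta_mul_G_dual hW hΩ]
    ring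
  simp only [Q.nablaF_of_W3 hm hW, ← Finset.mul_sum, Finset.sum_add_distrib, ← Finset.sum_mul]
  rw [hFθ, hGθ, htrG, htrF]
  linear_combination Q.nablaTheta y z * hκ

lemma ric_RmP_of_W3 (hm : 0 < m) (hW : Q.W3) (htr : Q.trP = 0) (hθ : Q.closed)
    (hΩ : ∀ x, Q.g Ω x = Q.theta x) (y z : Q.V) :
    Q.ric Q.RmP y z = Q.ric Q.Rm y z
      - Q.invDim * Q.G y z * (Q.divg Ω - Q.invDim * Q.theta Ω + Q.theta Ω)
      - (Q.nablaTheta y z - Q.invDim * (Q.theta y * Q.theta z)) := by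
  rw [ric_RmP, Q.trace₁₄_nablaF_of_W3 hm hW htr hθ hΩ,
    Q.trace₂₄_nablaF_of_W3 hm hW htr hΩ]
  ring

variable {A : Q.V → Q.V → Q.C} {K : Q.V → Q.V → Q.V → Q.V → Q.C}

lemma trB_A_of_W3 (hΩ : ∀ x, Q.g Ω x = Q.theta x)
    (hA : ∀ y z, A y z = Q.nablaTheta y z - ((1 : ℝ) / m) • (Q.theta y * Q.theta z)) :
    Q.trB A = Q.divg Ω - Q.invDim * Q.theta Ω := by
  simp only [trB, hA, Algebra.smul_def, Q.algebraMap_one_div_dim, Finset.sum_sub_distrib,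
    ← Finset.mul_sum]
  rw [← trB, Q.trB_nablaTheta hΩ, Q.sum_theta_mul_theta_dual hΩ]

lemma ric_K_of_W3 (hm : 0 < m) (hW : Q.W3) (htr : Q.trP = 0) (hθ : Q.closed)
    (hΩ : ∀ x, Q.g Ω x = Q.theta x)
    (hA : ∀ y z, A y z = Q.nablaTheta y z - ((1 : ℝ) / m) • (Q.theta y * Q.theta z))
    (hK : ∀ x y z w, K x y z w =
      ((1 : ℝ) / 2) • (Q.Rm x y z w + Q.Rm x y (Q.P z) (Q.P w))) (y z : Q.V) :
    Q.ric K y z = Q.ric Q.Rm y z - ((1 : ℝ) / (2 * m)) •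
      ((Q.trB A + Q.theta Ω) * (Q.g y z + Q.g y (Q.P z)) + (m : ℝ) • A y z) := by
  rw [Q.ric_eq_smul_add (L' := Q.RmP) hK, Q.ric_RmP_of_W3 hm hW htr hθ hΩ, ← G_apply_add,
    Q.trB_A_of_W3 hΩ hA, hA, show (1 : ℝ) / (2 * m) = 1 / 2 * (1 / m) by ring]
  simp only [Algebra.smul_def, map_mul, map_natCast, Q.algebraMap_one_div_dim]
  linear_combination Q.ric Q.Rm y z * algebraMap_half_mul_two (A := Q.C)
    + algebraMap ℝ Q.C (1 / 2) * (Q.nablaTheta y z - Q.invDim * (Q.theta y * Q.theta z))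
      * Q.invDim_mul_dim hm

lemma scal_K_of_W3 (hm : 0 < m) (hW : Q.W3) (htr : Q.trP = 0) (hθ : Q.closed)
    (hΩ : ∀ x, Q.g Ω x = Q.theta x)
    (hA : ∀ y z, A y z = Q.nablaTheta y z - ((1 : ℝ) / m) • (Q.theta y * Q.theta z))
    (hK : ∀ x y z w, K x y z w =
      ((1 : ℝ) / 2) • (Q.Rm x y z w + Q.Rm x y (Q.P z) (Q.P w))) :
    Q.scal K = Q.scal Q.Rm - Q.divg Ω - (((m : ℝ) - 2) / (2 * m)) • Q.theta Ω := by
  have hG : ∑ i, (Q.g (Q.e i) (Q.e' i) + Q.g (Q.e i) (Q.P (Q.e' i))) = m := by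
    simp only [← G_apply_add, Q.G_comm (Q.e _), Q.sum_G_dual_self htr]
  have hρ : ∑ i, Q.ric Q.Rm (Q.e i) (Q.e' i) = Q.scal Q.Rm := rfl
  rw [scal, Finset.sum_congr rfl fun i _ => Q.ric_K_of_W3 hm hW htr hθ hΩ hA hK _ _,
    Finset.sum_sub_distrib, hρ, ← Finset.smul_sum, Finset.sum_add_distrib, ← Finset.mul_sum,
    ← Finset.smul_sum, hG, ← trB, Q.trB_A_of_W3 hΩ hA,
    show (1 : ℝ) / (2 * m) = 1 / 2 * (1 / m) by ring,
    show ((m : ℝ) - 2) / (2 * m) = 1 / 2 - 1 / m by field_simp]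
  simp only [Algebra.smul_def, map_mul, map_sub, map_natCast, Q.algebraMap_one_div_dim]
  linear_combination
    -algebraMap ℝ Q.C (1 / 2) * (Q.divg Ω - Q.invDim * Q.theta Ω + Q.theta Ω) * Q.invDim_mul_dim hm
    - algebraMap ℝ Q.C (1 / 2) * (Q.divg Ω - Q.invDim * Q.theta Ω) * Q.invDim_mul_dim hm
    - (Q.divg Ω - Q.invDim * Q.theta Ω) * algebraMap_half_mul_two (A := Q.C)

end W3

end RAPM

open RAPM in
/-- On a `W̄₃`-manifold of dimension `2n` with closed `θ`, for
`K = (1/2){R + R(·,·,P·,P·)}`: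
`ρ(K) = ρ - (1/4n){[tr A + θ(Ω)][g + g̃] + 2nA}`,
`τ(K) = τ - div Ω - ((n-1)/2n)θ(Ω)` and `τ*(K) = τ*`. -/
theorem statement14 {n : ℕ} (hn : 0 < n) (Q : RAPM (2*n)) (htr : Q.trP = 0)
    (hW : Q.W3) (hθ : Q.closed) (Ω : Q.V) (hΩ : ∀ x, Q.g Ω x = Q.theta x)
    (A : Q.V → Q.V → Q.C)
    (hA : ∀ y z, A y z =
      Q.nablaTheta y z - ((1 : ℝ)/(2*(n : ℝ))) • (Q.theta y * Q.theta z))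
    (K : Q.V → Q.V → Q.V → Q.V → Q.C)
    (hK : ∀ x y z w, K x y z w =
      ((1 : ℝ)/2) • (Q.Rm x y z w + Q.Rm x y (Q.P z) (Q.P w))) :
    (∀ y z, Q.ric K y z = Q.ric Q.Rm y z -
      ((1 : ℝ)/(4*(n : ℝ))) •
        ((Q.trB A + Q.theta Ω) * (Q.g y z + Q.g y (Q.P z)) +
          (2*(n : ℝ)) • A y z)) ∧
    Q.scal K = Q.scal Q.Rm - Q.divg Ω -
      (((n : ℝ) - 1)/(2*(n : ℝ))) • Q.theta Ω ∧
    Q.scalStar K = Q.scalStar Q.Rm := by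
  have hm : 0 < 2 * n := by omega
  have hA' : ∀ y z, A y z =
      Q.nablaTheta y z - ((1 : ℝ) / ((2 * n : ℕ) : ℝ)) • (Q.theta y * Q.theta z) := by
    intro y z
    rw [hA]
    push_cast
    rfl
  refine ⟨fun y z => ?_, ?_, Q.scalStar_K hK⟩
  · convert Q.ric_K_of_W3 hm hW htr hθ hΩ hA' hK y z using 3 <;> push_cast <;> ring
  · convert Q.scal_K_of_W3 hm hW htr hθ hΩ hA' hK using 3
    push_cast
    field_simp
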